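/- Let n ≥ 2 and consider the ring homomorphism φ : B → ∏_{a=1}^n A/(z_a) whose a-th component is induced by the quotient map A → A/(z_a) (this is well defined since z_a divides W). Then: (i) φ is injective; and (ii) a tuple (f_1,…,f_n) ∈ ∏_{a=1}^n A/(z_a) lies in the image of φ if and only if for every pair of indices a, b, the images of f_a and f_b in A/(z_a, z_b) coincide. (This is the affine-ring form of the paper's colimit presentation colim_{I ⊊ {1,…,n}} X_I ≅ X_{n-1} of the union of coordinate hyperplanes by its coordinate subspaces, underlying its descent proposition for coherent sheaves on X_{n-1}.) -/

import Mathlib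

open MvPolynomial

set_option synthInstance.maxHeartbeats 1000000
set_option maxHeartbeats 1000000

noncomputable def hypEv {k : Type} [Field k] {n : ℕ} (a : Fin n) :
    MvPolynomial (Fin n) k →ₐ[k] MvPolynomial (Fin n) k :=
  aeval (fun b => if b = a then 0 else X b)

lemma hypEv_X_self {k : Type} [Field k] {n : ℕ} (a : Fin n) :
    hypEv (k := k) a (X a) = 0 := by simp [hypEv]

lemma hypEv_X_ne {k : Type} [Field k] {n : ℕ} {a b : Fin n} (h : b ≠ a) :
    hypEv (k := k) a (X b) = X b := by simp [hypEv, h]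

lemma hyp_dvd_sub_ev {k : Type} [Field k] {n : ℕ} (a : Fin n)
    (f : MvPolynomial (Fin n) k) : X a ∣ f - hypEv a f := by
  induction f using MvPolynomial.induction_on with
  | C r => simp [hypEv]
  | add f g hf hg =>
      have := dvd_add hf hg
      rwa [sub_add_sub_comm, ← map_add] at this
  | mul_X f b hf =>
      by_cases hb : b = a
      · subst hb
        rw [map_mul, hypEv_X_self, mul_zero, sub_zero]
        exact Dvd.intro_left f rfl
      · rw [map_mul, hypEv_X_ne hb, ← sub_mul]
        exact hf.mul_right _

lemma hyp_dvd_iff {k : Type} [Field k] {n : ℕ} (a : Fin n)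
    (f : MvPolynomial (Fin n) k) : X a ∣ f ↔ hypEv a f = 0 := by
  constructor
  · rintro ⟨g, rfl⟩
    rw [map_mul, hypEv_X_self, zero_mul]
  · intro h
    have := hyp_dvd_sub_ev a f
    rwa [h, sub_zero] at this

lemma hyp_dvd_of_dvd_mul {k : Type} [Field k] {n : ℕ} {a b : Fin n} (h : b ≠ a)
    {g : MvPolynomial (Fin n) k} (hd : X b ∣ X a * g) : X b ∣ g := by
  rw [hyp_dvd_iff] at hd ⊢
  rw [map_mul, hypEv_X_ne h.symm] at hd
  exact (mul_eq_zero.mp hd).resolve_left (X_ne_zero a)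

lemma hyp_prod_dvd {k : Type} [Field k] {n : ℕ} (s : Finset (Fin n))
    (f : MvPolynomial (Fin n) k) (h : ∀ a ∈ s, X a ∣ f) :
    (∏ a ∈ s, X a) ∣ f := by
  induction s using Finset.induction_on generalizing f with
  | empty => simp
  | insert a s ha ih =>
      obtain ⟨g, rfl⟩ := h a (Finset.mem_insert_self a s)
      rw [Finset.prod_insert ha]
      refine mul_dvd_mul_left _ (ih g fun b hb => ?_)
      exact hyp_dvd_of_dvd_mul (by rintro rfl; exact ha hb)
        (h b (Finset.mem_insert_of_mem hb))

lemma hyp_patch {k : Type} [Field k] {n : ℕ} (P : Fin n → MvPolynomial (Fin n) k)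
    (hcomp : ∀ a b : Fin n, P a - P b ∈
      Ideal.span ({X a, X b} : Set (MvPolynomial (Fin n) k)))
    (s : Finset (Fin n)) :
    ∃ Q : MvPolynomial (Fin n) k, ∀ a ∈ s,
      P a - Q ∈ Ideal.span ({X a} : Set (MvPolynomial (Fin n) k)) := by
  induction s using Finset.induction_on with
  | empty => exact ⟨0, by simp⟩
  | insert m s hm ih =>
      obtain ⟨Q, hQ⟩ := ih
      have hdvd : ∀ a ∈ s, X a ∣ hypEv m (P m - Q) := by
        intro a ha
        have ham : a ≠ m := fun h => hm (h ▸ ha)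
        have h1 : P m - Q ∈ Ideal.span ({X a, X m} : Set (MvPolynomial (Fin n) k)) := by
          have h2 : P m - P a ∈ Ideal.span ({X a, X m} : Set (MvPolynomial (Fin n) k)) := by
            have := hcomp m a
            rwa [Set.pair_comm] at this
          have h3 : P a - Q ∈ Ideal.span ({X a, X m} : Set (MvPolynomial (Fin n) k)) :=
            Ideal.span_mono (Set.singleton_subset_iff.mpr (Set.mem_insert _ _)) (hQ a ha)
          have := Ideal.add_mem _ h2 h3
          rwa [sub_add_sub_cancel] at this
        obtain ⟨u, v, huv⟩ := Ideal.mem_span_pair.mp h1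
        rw [← huv, map_add, map_mul, map_mul, hypEv_X_self, mul_zero, add_zero,
          hypEv_X_ne ham]
        exact Dvd.intro_left _ rfl
      obtain ⟨R, hR⟩ := hyp_prod_dvd s _ hdvd
      refine ⟨Q + (∏ a ∈ s, X a) * R, fun a ha => ?_⟩
      rcases Finset.mem_insert.mp ha with rfl | ha'
      · rw [Ideal.mem_span_singleton]
        have : P a - (Q + (∏ b ∈ s, X b) * R) = (P a - Q) - hypEv a (P a - Q) := by
          rw [hR]; ring
        rw [this]
        exact hyp_dvd_sub_ev a _
      · rw [Ideal.mem_span_singleton]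
        have : P a - (Q + (∏ b ∈ s, X b) * R) = (P a - Q) - (∏ b ∈ s, X b) * R := by ring
        rw [this]
        refine dvd_sub ?_ ?_
        · exact Ideal.mem_span_singleton.mp (hQ a ha')
        · exact (Finset.dvd_prod_of_mem _ ha').mul_right _

/-- the ring map `φ : B = A/(z_1⋯z_n) → ∏_a A/(z_a)` induced by the
quotient maps is injective, and its image consists exactly of the tuples
`(f_1,…,f_n)` such that for all `a, b` the images of `f_a` and `f_b` in
`A/(z_a, z_b)` agree. -/
theorem hyperplanes_descent
    (k : Type) [Field k] (n : ℕ) (hn : 2 ≤ n)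
    (hW : ∀ a : Fin n,
      Ideal.span ({∏ b : Fin n, X b} : Set (MvPolynomial (Fin n) k)) ≤
        Ideal.span ({X a} : Set (MvPolynomial (Fin n) k)))
    (hab : ∀ a b : Fin n,
      Ideal.span ({X a} : Set (MvPolynomial (Fin n) k)) ≤
        Ideal.span ({X a, X b} : Set (MvPolynomial (Fin n) k)))
    (φ : (MvPolynomial (Fin n) k ⧸
            Ideal.span ({∏ b : Fin n, X b} : Set (MvPolynomial (Fin n) k))) →+*
          ∀ a : Fin n,
            MvPolynomial (Fin n) k ⧸ Ideal.span ({X a} : Set (MvPolynomial (Fin n) k)))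
    (hφ : φ = Pi.ringHom (fun a =>
      Ideal.Quotient.factor
        (S := Ideal.span ({∏ b : Fin n, X b} : Set (MvPolynomial (Fin n) k)))
        (T := Ideal.span ({X a} : Set (MvPolynomial (Fin n) k))) (hW a))) :
    Function.Injective φ ∧
    ∀ f : ∀ a : Fin n,
        MvPolynomial (Fin n) k ⧸ Ideal.span ({X a} : Set (MvPolynomial (Fin n) k)),
      (f ∈ Set.range φ ↔
        ∀ a b : Fin n,
          Ideal.Quotient.factor
            (S := Ideal.span ({X a} : Set (MvPolynomial (Fin n) k)))
            (T := Ideal.span ({X a, X b} : Set (MvPolynomial (Fin n) k))) (hab a b) (f a) =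
          Ideal.Quotient.factor
            (S := Ideal.span ({X b} : Set (MvPolynomial (Fin n) k)))
            (T := Ideal.span ({X a, X b} : Set (MvPolynomial (Fin n) k)))
            (by simpa [Set.pair_comm] using hab b a) (f b)) := by
  subst hφ
  constructor
  · rw [injective_iff_map_eq_zero]
    intro x hx
    obtain ⟨p, rfl⟩ := Ideal.Quotient.mk_surjective x
    have hpa : ∀ a : Fin n, X a ∣ p := by
      intro a
      have := congrFun hx a
      rw [Pi.ringHom, Pi.ringHom_apply, Ideal.Quotient.factor_mk, Pi.zero_apply] at this
      exact Ideal.mem_span_singleton.mp (Ideal.Quotient.eq_zero_iff_mem.mp this)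
    have := hyp_prod_dvd Finset.univ p (fun a _ => hpa a)
    exact Ideal.Quotient.eq_zero_iff_mem.mpr (Ideal.mem_span_singleton.mpr this)
  · intro f
    constructor
    · rintro ⟨x, rfl⟩ a b
      obtain ⟨p, rfl⟩ := Ideal.Quotient.mk_surjective x
      simp only [Pi.ringHom, Pi.ringHom_apply, Ideal.Quotient.factor_mk]
    · intro hf
      choose P hP using fun a => Ideal.Quotient.mk_surjective (f a)
      have hcomp : ∀ a b : Fin n, P a - P b ∈
          Ideal.span ({X a, X b} : Set (MvPolynomial (Fin n) k)) := by
        intro a b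
        have := hf a b
        rw [← hP a, ← hP b, Ideal.Quotient.factor_mk, Ideal.Quotient.factor_mk] at this
        exact (Ideal.Quotient.eq).mp this
      obtain ⟨Q, hQ⟩ := hyp_patch P hcomp Finset.univ
      refine ⟨Ideal.Quotient.mk _ Q, funext fun a => ?_⟩
      rw [Pi.ringHom, Pi.ringHom_apply, Ideal.Quotient.factor_mk, ← hP a]
      refine (Ideal.Quotient.eq).mpr ?_
      have := (Ideal.span ({X a} : Set (MvPolynomial (Fin n) k))).neg_mem
        (hQ a (Finset.mem_univ a))
      rwa [neg_sub] at this
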